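/- Suppose the matrices A, B_w, B_d, C_v, D_vw, D_vd, C_e, D_ew, D_ed, a symmetric positive semidefinite P, a scalar λ ≥ 0, and a symmetric M satisfy the dissipativity LMI condition with the supply-rate matrix X = [[γ² I, 0], [0, −I]] for some γ ≥ 0. Then for every admissible trajectory (x, w, d, v, e) of the linear system whose uncertainty signals satisfy the static integral quadratic constraint defined by M, and with zero initial state x(0) = 0, the closed-loop L₂ gain bound holds: for every T ≥ 0, ∫₀ᵀ ‖e(t)‖² dt ≤ γ² ∫₀ᵀ ‖d(t)‖² dt. -/

import Mathlib

open Matrix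

/-- Negative semidefiniteness of a real matrix: `zᵀ N z ≤ 0` for all `z`. -/
def IsNegSemidef {m : Type*} [Fintype m] (N : Matrix m m ℝ) : Prop :=
  ∀ z : m → ℝ, z ⬝ᵥ N *ᵥ z ≤ 0

/-- The dissipativity LMI condition
`[[AᵀP + PA, P Bw, P Bd], [Bwᵀ P, 0, 0], [Bdᵀ P, 0, 0]] + λ Hᵀ M H − Gᵀ X G ⪯ 0` with
`H = [[Cv, Dvw, Dvd], [0, I, 0]]` and `G = [[0, 0, I], [Ce, Dew, Ded]]`. -/
def DissLMI {ιn ιw ιd ιv ιe : Type*} [Fintype ιn] [Fintype ιw] [Fintype ιd]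
    [Fintype ιv] [Fintype ιe] [DecidableEq ιw] [DecidableEq ιd]
    (A : Matrix ιn ιn ℝ) (Bw : Matrix ιn ιw ℝ) (Bd : Matrix ιn ιd ℝ)
    (Cv : Matrix ιv ιn ℝ) (Dvw : Matrix ιv ιw ℝ) (Dvd : Matrix ιv ιd ℝ)
    (Ce : Matrix ιe ιn ℝ) (Dew : Matrix ιe ιw ℝ) (Ded : Matrix ιe ιd ℝ)
    (P : Matrix ιn ιn ℝ) (lam : ℝ)
    (M : Matrix (ιv ⊕ ιw) (ιv ⊕ ιw) ℝ)
    (X : Matrix (ιd ⊕ ιe) (ιd ⊕ ιe) ℝ) : Prop :=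
  let H : Matrix (ιv ⊕ ιw) (ιn ⊕ (ιw ⊕ ιd)) ℝ :=
    fromBlocks Cv (fromCols Dvw Dvd) 0 (fromCols 1 0)
  let G : Matrix (ιd ⊕ ιe) (ιn ⊕ (ιw ⊕ ιd)) ℝ :=
    fromBlocks 0 (fromCols 0 1) Ce (fromCols Dew Ded)
  let F0 : Matrix (ιn ⊕ (ιw ⊕ ιd)) (ιn ⊕ (ιw ⊕ ιd)) ℝ :=
    fromBlocks (Aᵀ * P + P * A) (fromCols (P * Bw) (P * Bd))
      (fromRows (Bwᵀ * P) (Bdᵀ * P)) 0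
  IsNegSemidef (F0 + lam • (Hᵀ * M * H) - Gᵀ * X * G)

/-!
Evaluating the quadratic form of the LMI at `(x t, w t, d t)` shows that the storage function
`V t = x tᵀ P x t` obeys the dissipation inequality
`V' + λ (v, w)ᵀ M (v, w) + ‖e‖² ≤ γ² ‖d‖²` pointwise. Integrating over `[0, T]`, the storage
term contributes `V T - V 0 = V T ≥ 0` and the IQC term is nonnegative, which leaves the gain bound.
-/

theorem Matrix.dotProduct_transpose_mul_mul_mulVec {R k m : Type*} [CommSemiring R]
    [Fintype k] [Fintype m] (H : Matrix k m R) (M : Matrix k k R) (z : m → R) :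
    z ⬝ᵥ (Hᵀ * M * H) *ᵥ z = (H *ᵥ z) ⬝ᵥ M *ᵥ (H *ᵥ z) := by
  rw [Matrix.mul_assoc, ← mulVec_mulVec, dotProduct_transpose_mulVec, ← mulVec_mulVec,
    dotProduct_comm]

section

variable {ιn ιw ιd ιv ιe : Type*} [Fintype ιn] [Fintype ιw] [Fintype ιd]
    [Fintype ιv] [Fintype ιe] [DecidableEq ιw] [DecidableEq ιd]
    {A : Matrix ιn ιn ℝ} {Bw : Matrix ιn ιw ℝ} {Bd : Matrix ιn ιd ℝ}
    {Cv : Matrix ιv ιn ℝ} {Dvw : Matrix ιv ιw ℝ} {Dvd : Matrix ιv ιd ℝ}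
    {Ce : Matrix ιe ιn ℝ} {Dew : Matrix ιe ιw ℝ} {Ded : Matrix ιe ιd ℝ}
    {P : Matrix ιn ιn ℝ} {lam : ℝ} {M : Matrix (ιv ⊕ ιw) (ιv ⊕ ιw) ℝ}
    {X : Matrix (ιd ⊕ ιe) (ιd ⊕ ιe) ℝ}

theorem DissLMI.dissipation_inequality
    (hLMI : DissLMI A Bw Bd Cv Dvw Dvd Ce Dew Ded P lam M X)
    (a : ιn → ℝ) (b : ιw → ℝ) (c : ιd → ℝ) :
    (A *ᵥ a + Bw *ᵥ b + Bd *ᵥ c) ⬝ᵥ P *ᵥ a + a ⬝ᵥ P *ᵥ (A *ᵥ a + Bw *ᵥ b + Bd *ᵥ c)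
      + lam * (Sum.elim (Cv *ᵥ a + Dvw *ᵥ b + Dvd *ᵥ c) b ⬝ᵥ
          M *ᵥ Sum.elim (Cv *ᵥ a + Dvw *ᵥ b + Dvd *ᵥ c) b)
      ≤ Sum.elim c (Ce *ᵥ a + Dew *ᵥ b + Ded *ᵥ c) ⬝ᵥ
          X *ᵥ Sum.elim c (Ce *ᵥ a + Dew *ᵥ b + Ded *ᵥ c) := by
  unfold DissLMI IsNegSemidef at hLMI
  have h := hLMI (Sum.elim a (Sum.elim b c))
  simp only [sub_mulVec, add_mulVec, smul_mulVec, dotProduct_sub, dotProduct_add,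
    dotProduct_smul, smul_eq_mul, dotProduct_transpose_mul_mul_mulVec, fromBlocks_mulVec,
    Sum.elim_comp_inl, Sum.elim_comp_inr, fromCols_mulVec_sumElim, fromRows_mulVec,
    sumElim_dotProduct_sumElim, zero_mulVec, add_zero, zero_add, one_mulVec] at h
  simp only [← mulVec_mulVec, dotProduct_transpose_mulVec, dotProduct_comm (P *ᵥ a)] at h
  simp only [mulVec_add, add_dotProduct, dotProduct_add, add_assoc] at h ⊢
  linarith

end

section Calculus

variable {𝕜 ι m : Type*} [NontriviallyNormedField 𝕜] [Fintype ι] {f g : 𝕜 → ι → 𝕜}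
  {f' g' : ι → 𝕜} {s : Set 𝕜} {t : 𝕜}

theorem HasDerivWithinAt.dotProduct (hf : HasDerivWithinAt f f' s t)
    (hg : HasDerivWithinAt g g' s t) :
    HasDerivWithinAt (fun u => f u ⬝ᵥ g u) (f' ⬝ᵥ g t + f t ⬝ᵥ g') s t := by
  simpa only [_root_.dotProduct, Finset.sum_add_distrib, Pi.mul_apply] using
    HasDerivWithinAt.fun_sum (u := Finset.univ) fun i _ =>
      (hasDerivWithinAt_pi.1 hf i).mul (hasDerivWithinAt_pi.1 hg i)

theorem HasDerivWithinAt.const_mulVec (Q : Matrix m ι 𝕜) (hf : HasDerivWithinAt f f' s t) :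
    HasDerivWithinAt (fun u => Q *ᵥ f u) (Q *ᵥ f') s t :=
  hasDerivWithinAt_pi.2 fun i => by
    show HasDerivWithinAt (fun u => Q i ⬝ᵥ f u) (Q i ⬝ᵥ f') s t
    simpa only [zero_dotProduct, zero_add] using
      (hasDerivWithinAt_const t s (Q i)).dotProduct hf

end Calculus

@[fun_prop]
theorem ContinuousOn.sumElim_pi {X α β γ : Type*} [TopologicalSpace X] [TopologicalSpace γ]
    {f : X → α → γ} {g : X → β → γ} {s : Set X} (hf : ContinuousOn f s) (hg : ContinuousOn g s) :
    ContinuousOn (fun x => Sum.elim (f x) (g x)) s :=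
  continuousOn_pi.2 <| Sum.forall.2
    ⟨fun i => (continuous_apply i).comp_continuousOn hf,
      fun i => (continuous_apply i).comp_continuousOn hg⟩

theorem integral_le_const_mul_integral_of_dissipation {V V' q E D : ℝ → ℝ} {lam c T : ℝ}
    (hT : 0 ≤ T) (hV : ∀ t ∈ Set.Ici (0 : ℝ), HasDerivWithinAt V (V' t) (Set.Ici 0) t)
    (hVT : V 0 ≤ V T) (hq : ContinuousOn q (Set.Icc 0 T)) (hE : ContinuousOn E (Set.Icc 0 T))
    (hD : ContinuousOn D (Set.Icc 0 T)) (hlam : 0 ≤ lam) (hqT : 0 ≤ ∫ t in (0 : ℝ)..T, q t)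
    (hdiss : ∀ t, V' t + lam * q t + E t ≤ c * D t) :
    ∫ t in (0 : ℝ)..T, E t ≤ c * ∫ t in (0 : ℝ)..T, D t := by
  have hFTC : V T - V 0 ≤ ∫ t in (0 : ℝ)..T, c * D t - E t - lam * q t :=
    intervalIntegral.sub_le_integral_of_hasDeriv_right_of_le hT
      (fun t ht => (hV t ht.1).continuousWithinAt.mono Set.Icc_subset_Ici_self)
      (fun t ht => (hV t ht.1.le).mono (Set.Ioi_subset_Ici ht.1.le))
      (by fun_prop : ContinuousOn _ _).integrableOn_Icc
      (fun t _ => by linarith [hdiss t])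
  rw [intervalIntegral.integral_sub, intervalIntegral.integral_sub,
    intervalIntegral.integral_const_mul, intervalIntegral.integral_const_mul] at hFTC
  · linarith [mul_nonneg hlam hqT]
  all_goals exact ContinuousOn.intervalIntegrable_of_Icc hT (by fun_prop)

theorem statement2_general {n nw nd nv ne : ℕ}
    (A : Matrix (Fin n) (Fin n) ℝ) (Bw : Matrix (Fin n) (Fin nw) ℝ)
    (Bd : Matrix (Fin n) (Fin nd) ℝ)
    (Cv : Matrix (Fin nv) (Fin n) ℝ) (Dvw : Matrix (Fin nv) (Fin nw) ℝ)
    (Dvd : Matrix (Fin nv) (Fin nd) ℝ)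
    (Ce : Matrix (Fin ne) (Fin n) ℝ) (Dew : Matrix (Fin ne) (Fin nw) ℝ)
    (Ded : Matrix (Fin ne) (Fin nd) ℝ)
    (P : Matrix (Fin n) (Fin n) ℝ) (lam : ℝ) (γ : ℝ)
    (M : Matrix (Fin nv ⊕ Fin nw) (Fin nv ⊕ Fin nw) ℝ)
    (hP : P.PosSemidef) (hlam : 0 ≤ lam)
    (hLMI : DissLMI A Bw Bd Cv Dvw Dvd Ce Dew Ded P lam M
      (fromBlocks ((γ ^ 2) • (1 : Matrix (Fin nd) (Fin nd) ℝ)) 0 0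
        (-(1 : Matrix (Fin ne) (Fin ne) ℝ))))
    (x : ℝ → Fin n → ℝ) (w : ℝ → Fin nw → ℝ) (d : ℝ → Fin nd → ℝ)
    (v : ℝ → Fin nv → ℝ) (e : ℝ → Fin ne → ℝ)
    (hw : ContinuousOn w (Set.Ici 0)) (hd : ContinuousOn d (Set.Ici 0))
    (hx : ∀ t ∈ Set.Ici (0:ℝ),
      HasDerivWithinAt x (A *ᵥ x t + Bw *ᵥ w t + Bd *ᵥ d t) (Set.Ici 0) t)
    (hv : ∀ t, v t = Cv *ᵥ x t + Dvw *ᵥ w t + Dvd *ᵥ d t)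
    (he : ∀ t, e t = Ce *ᵥ x t + Dew *ᵥ w t + Ded *ᵥ d t)
    (hIQC : ∀ T, 0 ≤ T → 0 ≤ ∫ t in (0:ℝ)..T,
      Sum.elim (v t) (w t) ⬝ᵥ M *ᵥ Sum.elim (v t) (w t))
    (hx0 : x 0 = 0) :
    ∀ T, 0 ≤ T →
      (∫ t in (0:ℝ)..T, e t ⬝ᵥ e t) ≤ γ ^ 2 * ∫ t in (0:ℝ)..T, d t ⬝ᵥ d t := by
  intro T hT
  have hxc : ContinuousOn x (Set.Ici 0) := fun t ht => (hx t ht).continuousWithinAt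
  have hvc : ContinuousOn v (Set.Ici 0) := by rw [funext hv]; fun_prop
  have hec : ContinuousOn e (Set.Ici 0) := by rw [funext he]; fun_prop
  have hsub : Set.Icc 0 T ⊆ Set.Ici (0 : ℝ) := Set.Icc_subset_Ici_self
  refine integral_le_const_mul_integral_of_dissipation hT
    (V := fun t => x t ⬝ᵥ P *ᵥ x t) (fun t ht => (hx t ht).dotProduct ((hx t ht).const_mulVec P))
    ?_ ((by fun_prop : ContinuousOn _ _).mono hsub) ((by fun_prop : ContinuousOn _ _).mono hsub)
    ((by fun_prop : ContinuousOn _ _).mono hsub) hlam (hIQC T hT) fun t => ?_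
  · simpa [hx0] using hP.dotProduct_mulVec_nonneg (x T)
  · have h := hLMI.dissipation_inequality (x t) (w t) (d t)
    simp only [fromBlocks_mulVec, sumElim_dotProduct_sumElim, Sum.elim_comp_inl,
      Sum.elim_comp_inr, smul_mulVec, one_mulVec, zero_mulVec, neg_mulVec, add_zero, zero_add,
      dotProduct_smul, dotProduct_neg, smul_eq_mul] at h
    rw [hv, he]
    linarith

/-- the dissipativity LMI with supply-rate matrix
`X = [[γ² I, 0], [0, −I]]` implies a closed-loop `L₂` gain bound of `γ`
from zero initial state, along trajectories satisfying the static IQC. -/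
theorem statement2 {n nw nd nv ne : ℕ}
    (A : Matrix (Fin n) (Fin n) ℝ) (Bw : Matrix (Fin n) (Fin nw) ℝ)
    (Bd : Matrix (Fin n) (Fin nd) ℝ)
    (Cv : Matrix (Fin nv) (Fin n) ℝ) (Dvw : Matrix (Fin nv) (Fin nw) ℝ)
    (Dvd : Matrix (Fin nv) (Fin nd) ℝ)
    (Ce : Matrix (Fin ne) (Fin n) ℝ) (Dew : Matrix (Fin ne) (Fin nw) ℝ)
    (Ded : Matrix (Fin ne) (Fin nd) ℝ)
    (P : Matrix (Fin n) (Fin n) ℝ) (lam : ℝ) (γ : ℝ)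
    (M : Matrix (Fin nv ⊕ Fin nw) (Fin nv ⊕ Fin nw) ℝ)
    (hP : P.PosSemidef) (hlam : 0 ≤ lam) (hγ : 0 ≤ γ) (hM : M.IsSymm)
    (hLMI : DissLMI A Bw Bd Cv Dvw Dvd Ce Dew Ded P lam M
      (fromBlocks ((γ ^ 2) • (1 : Matrix (Fin nd) (Fin nd) ℝ)) 0 0
        (-(1 : Matrix (Fin ne) (Fin ne) ℝ))))
    (x : ℝ → Fin n → ℝ) (w : ℝ → Fin nw → ℝ) (d : ℝ → Fin nd → ℝ)
    (v : ℝ → Fin nv → ℝ) (e : ℝ → Fin ne → ℝ)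
    (hw : ContinuousOn w (Set.Ici 0)) (hd : ContinuousOn d (Set.Ici 0))
    (hx : ∀ t ∈ Set.Ici (0:ℝ),
      HasDerivWithinAt x (A *ᵥ x t + Bw *ᵥ w t + Bd *ᵥ d t) (Set.Ici 0) t)
    (hv : ∀ t, v t = Cv *ᵥ x t + Dvw *ᵥ w t + Dvd *ᵥ d t)
    (he : ∀ t, e t = Ce *ᵥ x t + Dew *ᵥ w t + Ded *ᵥ d t)
    (hIQC : ∀ T, 0 ≤ T → 0 ≤ ∫ t in (0:ℝ)..T,
      Sum.elim (v t) (w t) ⬝ᵥ M *ᵥ Sum.elim (v t) (w t))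
    (hx0 : x 0 = 0) :
    ∀ T, 0 ≤ T →
      (∫ t in (0:ℝ)..T, e t ⬝ᵥ e t) ≤ γ ^ 2 * ∫ t in (0:ℝ)..T, d t ⬝ᵥ d t :=
  statement2_general A Bw Bd Cv Dvw Dvd Ce Dew Ded P lam γ M hP hlam hLMI x w d v e hw hd hx hv he
    hIQC hx0
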